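/- Let 1 ≤ p₁, p₂ < ∞ and 0 < r ≤ 1, and let σ : 𝕋ⁿ × ℤⁿ → ℂ be such that σ(·,k) ∈ L^{p₂}(μ) for every k ∈ ℤⁿ and there exist constants C > 0 and s > n with ‖σ(·,k)‖_{L^{p₂}(μ)} ≤ C ⟨k⟩^{−s/r} for all k ∈ ℤⁿ. Then the operator A = Op(σ) with symbol σ is a well-defined bounded linear operator from L^{p₁}(μ) to L^{p₂}(μ) and is r-nuclear. -/

import Mathlib

open MeasureTheory ENNReal NNReal Real

noncomputable section

/-- For `0 < r ≤ 1`, a bounded linear operator `T : E → F` between complex Banach spaces is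
`r`-nuclear if there are sequences `(x'_m)` of continuous functionals on `E` and `(y_m)` in `F`
with `T v = ∑ₘ x'_m(v) • y_m` for all `v` and `∑ₘ ‖x'_m‖^r ‖y_m‖^r < ∞`. -/
def IsRNuclear {E F : Type*} [NormedAddCommGroup E] [NormedSpace ℂ E]
    [NormedAddCommGroup F] [NormedSpace ℂ F] (r : ℝ) (T : E →L[ℂ] F) : Prop :=
  ∃ (x' : ℕ → (E →L[ℂ] ℂ)) (y : ℕ → F),
    (∀ v : E, HasSum (fun m => x' m v • y m) (T v)) ∧
    Summable (fun m => ‖x' m‖ ^ r * ‖y m‖ ^ r)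

/-- The `n`-torus `𝕋ⁿ = (ℝ/ℤ)ⁿ`; its `volume` measure is the product of the normalized
Haar measures of the circle factors, a probability measure. -/
abbrev Torus (n : ℕ) := Fin n → AddCircle (1 : ℝ)

/-- The character `e_k(x) = ∏ i, exp(2πi k_i x_i)` on the `n`-torus. -/
noncomputable def eK {n : ℕ} (k : Fin n → ℤ) (x : Torus n) : ℂ :=
  ∏ i, (fourier (k i) : C(AddCircle (1 : ℝ), ℂ)) (x i)

/-- The `k`-th Fourier coefficient `f̂(k) = ∫ f conj(e_k) dμ` of `f : 𝕋ⁿ → ℂ`. -/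
noncomputable def fourierCoeffT {n : ℕ} (f : Torus n → ℂ) (k : Fin n → ℤ) : ℂ :=
  ∫ x, f x * (starRingEnd ℂ) (eK k x)

/-- `A` is the operator `Op(σ)` with symbol `σ`: `A f = ∑_k f̂(k) • (σ(·,k) e_k)`,
the series converging in `L^{p₂}(μ)`. -/
def IsOp {n : ℕ} {p₁ p₂ : ℝ≥0∞} [Fact (1 ≤ p₁)] [Fact (1 ≤ p₂)]
    (σ : Torus n → (Fin n → ℤ) → ℂ)
    (A : Lp ℂ p₁ (volume : Measure (Torus n)) →L[ℂ] Lp ℂ p₂ (volume : Measure (Torus n))) :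
    Prop :=
  ∃ F : (Fin n → ℤ) → Lp ℂ p₂ (volume : Measure (Torus n)),
    (∀ k, ⇑(F k) =ᵐ[volume] fun x => σ x k * eK k x) ∧
    ∀ f : Lp ℂ p₁ (volume : Measure (Torus n)),
      HasSum (fun k => fourierCoeffT (⇑f) k • F k) (A f)

/-- The weight `⟨k⟩ = (1 + 4π² ∑ᵢ kᵢ²)^{1/2}` on `ℤⁿ`. -/
noncomputable def jpW {n : ℕ} (k : Fin n → ℤ) : ℝ :=
  (1 + 4 * π ^ 2 * ∑ i, ((k i : ℝ)) ^ 2) ^ ((1 : ℝ) / 2)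

/-! Each coefficient functional `f ↦ f̂(k)` has norm at most `1` on `L^{p₁}` (as `|e_k| = 1` and
`μ` is a probability measure), and the column `σ(·,k) e_k` has `L^{p₂}`-norm `‖σ(·,k)‖_{L^{p₂}}`.
So `Op(σ) = ∑ₖ f̂(k) • σ(·,k) e_k` is an expansion whose terms satisfy
`‖f ↦ f̂(k)‖^r ‖σ(·,k) e_k‖^r ≤ C^r ⟨k⟩^{-s}`, and `∑ₖ ⟨k⟩^{-s} < ∞` for `s > n`, by comparison with
`∏ᵢ (1 + kᵢ²)^{-s/(2n)}`. Since `r ≤ 1`, `ℓ^r ⊆ ℓ^1`, so the expansion also converges absolutely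
in operator norm, which defines `Op(σ)`. -/

instance : IsProbabilityMeasure (volume : Measure (AddCircle (1 : ℝ))) :=
  ⟨by simp [AddCircle.measure_univ]⟩

section Characters

variable {n : ℕ}

lemma norm_eK (k : Fin n → ℤ) (x : Torus n) : ‖eK k x‖ = 1 := by
  rw [eK, norm_prod]
  exact Finset.prod_eq_one fun i _ => Circle.norm_coe _

lemma continuous_eK (k : Fin n → ℤ) : Continuous (eK k) :=
  continuous_finsetProd _ fun i _ => (map_continuous (fourier (k i))).comp (continuous_apply i)

lemma eLpNorm_mul_eK (g : Torus n → ℂ) (k : Fin n → ℤ) (p : ℝ≥0∞) :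
    eLpNorm (fun x => g x * eK k x) p volume = eLpNorm g p volume :=
  eLpNorm_congr_norm_ae (.of_forall fun x => by simp [norm_eK])

lemma memLp_mul_eK {g : Torus n → ℂ} {p : ℝ≥0∞} (hg : MemLp g p volume) (k : Fin n → ℤ) :
    MemLp (fun x => g x * eK k x) p volume :=
  ⟨hg.aestronglyMeasurable.mul (continuous_eK k).aestronglyMeasurable,
    by rw [eLpNorm_mul_eK]; exact hg.eLpNorm_lt_top⟩

lemma norm_eq_eLpNorm_of_ae_eq_mul_eK {p : ℝ≥0∞} {g : Torus n → ℂ} {k : Fin n → ℤ}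
    {F : Lp ℂ p (volume : Measure (Torus n))} (hF : F =ᵐ[volume] fun x => g x * eK k x) :
    ‖F‖ = (eLpNorm g p volume).toReal := by
  rw [Lp.norm_def, eLpNorm_congr_ae hF, eLpNorm_mul_eK]

end Characters

section FourierCoeff

variable {n : ℕ} {p : ℝ≥0∞} [Fact (1 ≤ p)]

lemma integrable_mul_conj_eK (f : Lp ℂ p (volume : Measure (Torus n))) (k : Fin n → ℤ) :
    Integrable (fun x => f x * (starRingEnd ℂ) (eK k x)) volume :=
  ((Lp.memLp f).integrable Fact.out).mul_bdd (c := 1)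
    (continuous_star.comp (continuous_eK k)).aestronglyMeasurable
    (.of_forall fun x => by simp [norm_eK])

lemma norm_fourierCoeffT_le (f : Lp ℂ p (volume : Measure (Torus n))) (k : Fin n → ℤ) :
    ‖fourierCoeffT (⇑f) k‖ ≤ ‖f‖ :=
  calc ‖fourierCoeffT (⇑f) k‖ ≤ ∫ x, ‖f x‖ :=
        norm_integral_le_of_norm_le ((Lp.memLp f).integrable Fact.out).norm
          (.of_forall fun x => by simp [norm_eK])
    _ = (eLpNorm f 1 volume).toReal := by
        rw [toReal_eLpNorm (Lp.aestronglyMeasurable f),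
          lpNorm_one_eq_integral_norm (Lp.aestronglyMeasurable f)]
    _ ≤ (eLpNorm f p volume).toReal :=
        ENNReal.toReal_mono (Lp.eLpNorm_ne_top f)
          (eLpNorm_le_eLpNorm_of_exponent_le Fact.out (Lp.aestronglyMeasurable f))
    _ = ‖f‖ := (Lp.norm_def f).symm

variable (p) in
def fourierCoeffCLM (k : Fin n → ℤ) : Lp ℂ p (volume : Measure (Torus n)) →L[ℂ] ℂ :=
  LinearMap.mkContinuous
    { toFun := fun f => fourierCoeffT (⇑f) k
      map_add' := fun f g => by
        rw [fourierCoeffT, fourierCoeffT, fourierCoeffT,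
          ← integral_add (integrable_mul_conj_eK f k) (integrable_mul_conj_eK g k)]
        refine integral_congr_ae ?_
        filter_upwards [Lp.coeFn_add f g] with x hx
        simp only [hx, Pi.add_apply, add_mul]
      map_smul' := fun c f => by
        rw [fourierCoeffT, fourierCoeffT, RingHom.id_apply, smul_eq_mul, ← integral_const_mul]
        refine integral_congr_ae ?_
        filter_upwards [Lp.coeFn_smul c f] with x hx
        simp only [hx, Pi.smul_apply, smul_eq_mul, mul_assoc] }
    1 fun f => by rw [one_mul]; exact norm_fourierCoeffT_le f k

lemma norm_fourierCoeffCLM_le (k : Fin n → ℤ) : ‖fourierCoeffCLM p (n := n) k‖ ≤ 1 :=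
  LinearMap.mkContinuous_norm_le _ zero_le_one _

end FourierCoeff

section Summability

lemma summable_one_add_sq_int_rpow_neg {t : ℝ} (ht : 1 < t) :
    Summable fun m : ℤ => (1 + (m : ℝ) ^ 2) ^ (-(t / 2)) := by
  refine (summable_abs_int_rpow ht).of_norm_bounded_eventually ?_
  filter_upwards [(Set.finite_singleton (0 : ℤ)).compl_mem_cofinite] with m hm
  have hm0 : (0 : ℝ) < |(m : ℝ)| ^ (2 : ℝ) := by
    have : (m : ℝ) ≠ 0 := by exact_mod_cast hm
    positivity
  rw [Real.norm_of_nonneg (by positivity)]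
  calc (1 + (m : ℝ) ^ 2) ^ (-(t / 2)) ≤ (|(m : ℝ)| ^ (2 : ℝ)) ^ (-(t / 2)) :=
        Real.rpow_le_rpow_of_nonpos hm0 (by rw [Real.rpow_two, sq_abs]; linarith)
          (by linarith)
    _ = |(m : ℝ)| ^ (-t) := by rw [← Real.rpow_mul (abs_nonneg _)]; ring_nf

lemma summable_pi_prod {α : Type*} {g : α → ℝ} (hg0 : 0 ≤ g) (hg : Summable g) (n : ℕ) :
    Summable fun k : Fin n → α => ∏ i, g (k i) := by
  induction n with
  | zero => exact .of_finite
  | succ n ih =>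
    have hprod := hg.mul_of_nonneg ih hg0 fun k => Finset.prod_nonneg fun i _ => hg0 _
    refine ((Fin.consEquiv fun _ => α).summable_iff).mp (hprod.congr fun p => ?_)
    simp [Fin.consEquiv, Fin.prod_univ_succ]

lemma jpW_rpow_two {n : ℕ} (k : Fin n → ℤ) :
    jpW k ^ (2 : ℝ) = 1 + 4 * π ^ 2 * ∑ i, (k i : ℝ) ^ 2 := by
  rw [jpW, ← Real.rpow_mul (by positivity)]
  norm_num

lemma one_le_jpW {n : ℕ} (k : Fin n → ℤ) : 1 ≤ jpW k := by
  refine Real.one_le_rpow ?_ (by norm_num)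
  have : 0 ≤ ∑ i, (k i : ℝ) ^ 2 := by positivity
  nlinarith [sq_nonneg π]

lemma jpW_nonneg {n : ℕ} (k : Fin n → ℤ) : 0 ≤ jpW k :=
  zero_le_one.trans (one_le_jpW k)

lemma one_add_sq_le_jpW_rpow_two {n : ℕ} (k : Fin n → ℤ) (i : Fin n) :
    1 + (k i : ℝ) ^ 2 ≤ jpW k ^ (2 : ℝ) := by
  have hi : (k i : ℝ) ^ 2 ≤ ∑ j, (k j : ℝ) ^ 2 :=
    Finset.single_le_sum (f := fun j => (k j : ℝ) ^ 2) (fun j _ => sq_nonneg _)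
      (Finset.mem_univ i)
  have hπ : 1 ≤ 4 * π ^ 2 := by nlinarith [Real.pi_gt_three]
  rw [jpW_rpow_two]
  nlinarith [sq_nonneg (k i : ℝ)]

lemma jpW_rpow_neg_le_prod {n : ℕ} (hn : n ≠ 0) {s : ℝ} (hs : 0 ≤ s) (k : Fin n → ℤ) :
    jpW k ^ (-s) ≤ ∏ i, (1 + (k i : ℝ) ^ 2) ^ (-(s / n / 2)) :=
  calc jpW k ^ (-s) = ∏ _i : Fin n, jpW k ^ (-(s / n)) := by
        rw [Finset.prod_const, Finset.card_univ, Fintype.card_fin, ← Real.rpow_natCast,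
          ← Real.rpow_mul (jpW_nonneg k)]
        field_simp
    _ ≤ _ := by
        refine Finset.prod_le_prod (fun i _ => Real.rpow_nonneg (jpW_nonneg k) _) fun i _ => ?_
        calc jpW k ^ (-(s / n)) = (jpW k ^ (2 : ℝ)) ^ (-(s / n / 2)) := by
              rw [← Real.rpow_mul (jpW_nonneg k)]
              ring_nf
          _ ≤ _ := Real.rpow_le_rpow_of_nonpos (by positivity) (one_add_sq_le_jpW_rpow_two k i)
              (neg_nonpos.mpr (by positivity))

lemma summable_jpW_rpow_neg {n : ℕ} {s : ℝ} (hs : n < s) :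
    Summable fun k : Fin n → ℤ => jpW k ^ (-s) := by
  rcases Nat.eq_zero_or_pos n with rfl | hn
  · exact .of_finite
  have hn' : (0 : ℝ) < n := by exact_mod_cast hn
  refine (summable_pi_prod (fun m => by positivity)
    (summable_one_add_sq_int_rpow_neg ((one_lt_div hn').mpr hs)) n).of_nonneg_of_le
    (fun k => Real.rpow_nonneg (jpW_nonneg k) _) (jpW_rpow_neg_le_prod hn.ne' (by linarith))

lemma summable_norm_of_summable_norm_rpow {ι E : Type*} [NormedAddCommGroup E] {r : ℝ}
    (hr0 : 0 < r) (hr1 : r ≤ 1) {f : ι → E} (h : Summable fun i => ‖f i‖ ^ r) :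
    Summable fun i => ‖f i‖ := by
  have hr : (ENNReal.ofReal r).toReal = r := ENNReal.toReal_ofReal hr0.le
  have hℓr : Memℓp f (ENNReal.ofReal r) := (memℓp_gen_iff (by rwa [hr])).mpr (by rwa [hr])
  have hℓ1 := (memℓp_gen_iff (by simp)).mp (hℓr.of_exponent_ge (ENNReal.ofReal_le_one.mpr hr1))
  simpa using hℓ1

end Summability

lemma Function.Injective.extend_zero_map₂ {ι γ α β M : Type*} [Zero α] [Zero β] [Zero M]
    {g : ι → γ} (hg : g.Injective) (a : ι → α) (b : ι → β) (φ : α → β → M) (hφ : φ 0 0 = 0) :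
    (fun c => φ (Function.extend g a 0 c) (Function.extend g b 0 c)) =
      Function.extend g (fun i => φ (a i) (b i)) 0 := by
  funext c
  by_cases hc : ∃ i, g i = c
  · obtain ⟨i, rfl⟩ := hc
    simp only [hg.extend_apply]
  · simp only [Function.extend_apply' _ _ _ hc, Pi.zero_apply, hφ]

section Nuclear

variable {E F : Type*} [NormedAddCommGroup E] [NormedSpace ℂ E]
  [NormedAddCommGroup F] [NormedSpace ℂ F]

lemma exists_hasSum_smul_of_summable_norm_mul [CompleteSpace F] {ι : Type*}
    (x' : ι → E →L[ℂ] ℂ) (y : ι → F) (h : Summable fun i => ‖x' i‖ * ‖y i‖) :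
    ∃ T : E →L[ℂ] F, ∀ v, HasSum (fun i => x' i v • y i) (T v) := by
  have hsum : Summable fun i => (x' i).smulRight (y i) :=
    .of_norm (by simpa only [ContinuousLinearMap.norm_smulRight_apply] using h)
  exact ⟨_, fun v => hsum.hasSum.mapL (ContinuousLinearMap.apply ℂ F v)⟩

lemma IsRNuclear.of_hasSum {ι : Type*} [Countable ι] {r : ℝ} (hr : r ≠ 0) {T : E →L[ℂ] F}
    (x' : ι → E →L[ℂ] ℂ) (y : ι → F) (hT : ∀ v, HasSum (fun i => x' i v • y i) (T v))
    (h : Summable fun i => ‖x' i‖ ^ r * ‖y i‖ ^ r) : IsRNuclear r T := by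
  obtain ⟨g, hg⟩ := exists_injective_nat ι
  refine ⟨Function.extend g x' 0, Function.extend g y 0, fun v => ?_, ?_⟩
  · rw [hg.extend_zero_map₂ x' y (fun a b => a v • b) (by simp), hasSum_extend_zero hg]
    exact hT v
  · rw [hg.extend_zero_map₂ x' y (fun a b => ‖a‖ ^ r * ‖b‖ ^ r)
      (by simp [Real.zero_rpow hr]), summable_extend_zero hg]
    exact h

end Nuclear

lemma summable_norm_rpow_of_decay {n : ℕ} {p : ℝ≥0∞} [Fact (1 ≤ p)]
    {σ : Torus n → (Fin n → ℤ) → ℂ} {r C s : ℝ} (hr0 : 0 < r) (hC : 0 ≤ C) (hs : n < s)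
    (hdecay : ∀ k, (eLpNorm (fun x => σ x k) p volume).toReal ≤ C * jpW k ^ (-(s / r)))
    (F : (Fin n → ℤ) → Lp ℂ p (volume : Measure (Torus n)))
    (hF : ∀ k, F k =ᵐ[volume] fun x => σ x k * eK k x) :
    Summable fun k => ‖F k‖ ^ r := by
  refine ((summable_jpW_rpow_neg hs).mul_left (C ^ r)).of_nonneg_of_le
    (fun k => Real.rpow_nonneg (norm_nonneg _) _) fun k => ?_
  calc ‖F k‖ ^ r ≤ (C * jpW k ^ (-(s / r))) ^ r := by
        rw [norm_eq_eLpNorm_of_ae_eq_mul_eK (hF k)]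
        exact Real.rpow_le_rpow ENNReal.toReal_nonneg (hdecay k) hr0.le
    _ = C ^ r * jpW k ^ (-s) := by
        rw [Real.mul_rpow hC (Real.rpow_nonneg (jpW_nonneg k) _), ← Real.rpow_mul (jpW_nonneg k),
          neg_mul, div_mul_cancel₀ _ hr0.ne']

theorem op_symbol_decay_rNuclear_general (n : ℕ)
    (p₁ p₂ : ℝ≥0∞) [Fact (1 ≤ p₁)] [Fact (1 ≤ p₂)]
    (r : ℝ) (hr0 : 0 < r) (hr1 : r ≤ 1)
    (σ : Torus n → (Fin n → ℤ) → ℂ)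
    (hσ : ∀ k, MemLp (fun x => σ x k) p₂ (volume : Measure (Torus n)))
    (C : ℝ) (hC : 0 < C) (s : ℝ) (hs : (n : ℝ) < s)
    (hdecay : ∀ k : Fin n → ℤ,
      (eLpNorm (fun x => σ x k) p₂ (volume : Measure (Torus n))).toReal ≤
        C * jpW k ^ (-(s / r))) :
    (∃ A : Lp ℂ p₁ (volume : Measure (Torus n)) →L[ℂ]
          Lp ℂ p₂ (volume : Measure (Torus n)), IsOp σ A) ∧
    ∀ A : Lp ℂ p₁ (volume : Measure (Torus n)) →L[ℂ]
          Lp ℂ p₂ (volume : Measure (Torus n)),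
      IsOp σ A → IsRNuclear r A := by
  have hcols := summable_norm_rpow_of_decay hr0 hC.le hs hdecay
  let G k := (memLp_mul_eK (hσ k) k).toLp
  have hG : ∀ k, G k =ᵐ[volume] fun x => σ x k * eK k x := fun k => MemLp.coeFn_toLp _
  constructor
  · have hsum : Summable fun k => ‖fourierCoeffCLM p₁ k‖ * ‖G k‖ :=
      (summable_norm_of_summable_norm_rpow hr0 hr1 (hcols G hG)).of_nonneg_of_le
        (fun k => by positivity) fun k => mul_le_of_le_one_left (norm_nonneg _)
          (norm_fourierCoeffCLM_le k)
    obtain ⟨A, hA⟩ := exists_hasSum_smul_of_summable_norm_mul _ _ hsum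
    exact ⟨A, G, hG, hA⟩
  · rintro A ⟨F, hF, hA⟩
    refine IsRNuclear.of_hasSum hr0.ne' (fourierCoeffCLM p₁) F hA <|
      (hcols F hF).of_nonneg_of_le (fun k => by positivity) fun k => ?_
    exact mul_le_of_le_one_left (by positivity)
      (Real.rpow_le_one (norm_nonneg _) (norm_fourierCoeffCLM_le k) hr0.le)

/-- **`r`-nuclearity from a decay estimate on the `L^{p₂}`-norms of the symbol.** Let
`1 ≤ p₁, p₂ < ∞`, `0 < r ≤ 1`, and `σ : 𝕋ⁿ × ℤⁿ → ℂ` with `σ(·,k) ∈ L^{p₂}(μ)` and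
`‖σ(·,k)‖_{L^{p₂}} ≤ C ⟨k⟩^{-s/r}` for some `C > 0`, `s > n`. Then `Op(σ)` is a well-defined
bounded operator from `L^{p₁}(μ)` to `L^{p₂}(μ)` and is `r`-nuclear. -/
theorem op_symbol_decay_rNuclear (n : ℕ) (hn : 1 ≤ n)
    (p₁ p₂ : ℝ≥0∞) [Fact (1 ≤ p₁)] [Fact (1 ≤ p₂)] (hp₁ : p₁ ≠ ∞) (hp₂ : p₂ ≠ ∞)
    (r : ℝ) (hr0 : 0 < r) (hr1 : r ≤ 1)
    (σ : Torus n → (Fin n → ℤ) → ℂ)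
    (hσ : ∀ k, MemLp (fun x => σ x k) p₂ (volume : Measure (Torus n)))
    (C : ℝ) (hC : 0 < C) (s : ℝ) (hs : (n : ℝ) < s)
    (hdecay : ∀ k : Fin n → ℤ,
      (eLpNorm (fun x => σ x k) p₂ (volume : Measure (Torus n))).toReal ≤
        C * jpW k ^ (-(s / r))) :
    (∃ A : Lp ℂ p₁ (volume : Measure (Torus n)) →L[ℂ]
          Lp ℂ p₂ (volume : Measure (Torus n)), IsOp σ A) ∧
    ∀ A : Lp ℂ p₁ (volume : Measure (Torus n)) →L[ℂ]
          Lp ℂ p₂ (volume : Measure (Torus n)),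
      IsOp σ A → IsRNuclear r A :=
  op_symbol_decay_rNuclear_general n p₁ p₂ r hr0 hr1 σ hσ C hC s hs hdecay
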